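/- arXiv:1608.02087 — 3 statements merged into one kernel-verified Lean document; each statement's English description precedes it below -/
import Mathlib

section
/- Let G be a finite graph and γ : E(G) → L an edge-labeling. Suppose for every vertex v, the labels of edges in the star St(v) take at most 2 distinct values (every vertex is a 'path vertex' or 'spur' under γ). Then the subgraph relation 'neighboring' on the set Ξ = { {e,f} : e ≠ f, γ(e) = γ(f) }, where {e₁,f₁} ~ {e₂,f₂} iff |e₁ ∩ e₂| = 1, |f₁ ∩ f₂| = 1 and the shared vertices have equal cluster (i.e., endpoints in the same class), has the property that if additionally γ restricted to each star is injective on labels, then the graph on Ξ induced by ~ has maximum degree at most 2. -/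
section Aux

variable {V W : Type*} [Fintype V] {G : SimpleGraph V} {γ : V → W}

private lemma aux_lab_ne (hinj : ∀ v : V, Set.InjOn γ (insert v (G.neighborSet v)))
    {v w : V} (h : G.Adj v w) : γ v ≠ γ w := by
  intro he
  exact G.ne_of_adj h
    (hinj v (Set.mem_insert v _) (Set.mem_insert_of_mem _ h) he)

private lemma aux_star_inj (hinj : ∀ v : V, Set.InjOn γ (insert v (G.neighborSet v)))
    (v : V) : Set.InjOn (Sym2.map γ) {e ∈ G.edgeSet | v ∈ e} := by
  rintro e ⟨he, hv⟩ e' ⟨he', hv'⟩ heq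
  obtain ⟨w, rfl⟩ := Sym2.mem_iff_exists.1 hv
  obtain ⟨w', rfl⟩ := Sym2.mem_iff_exists.1 hv'
  rw [SimpleGraph.mem_edgeSet] at he he'
  rw [Sym2.map_pair_eq, Sym2.map_pair_eq, Sym2.congr_right] at heq
  have : w = w' := hinj v (Set.mem_insert_of_mem _ he) (Set.mem_insert_of_mem _ he') heq
  rw [this]

private lemma aux_unique (hinj : ∀ v : V, Set.InjOn γ (insert v (G.neighborSet v)))
    (h2lab : ∀ v : V, ((Sym2.map γ) '' {e ∈ G.edgeSet | v ∈ e}).ncard ≤ 2)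
    {v : V} {e₀ e e' : Sym2 V}
    (h₀ : e₀ ∈ G.edgeSet) (hv₀ : v ∈ e₀) (he : e ∈ G.edgeSet) (hve : v ∈ e)
    (he' : e' ∈ G.edgeSet) (hve' : v ∈ e') (hne : e ≠ e₀) (hne' : e' ≠ e₀) : e = e' := by
  by_contra hdiff
  have hcard : ({e ∈ G.edgeSet | v ∈ e} : Set (Sym2 V)).ncard ≤ 2 := by
    rw [← Set.ncard_image_of_injOn (aux_star_inj hinj v)]; exact h2lab v
  have h3 : 2 < ({e ∈ G.edgeSet | v ∈ e} : Set (Sym2 V)).ncard := by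
    rw [Set.two_lt_ncard (Set.toFinite _)]
    exact ⟨e₀, ⟨h₀, hv₀⟩, e, ⟨he, hve⟩, e', ⟨he', hve'⟩, Ne.symm hne, Ne.symm hne', hdiff⟩
  omega

private lemma aux_vertex (hinj : ∀ v : V, Set.InjOn γ (insert v (G.neighborSet v)))
    {f : Sym2 V} (hf : f ∈ G.edgeSet) {u u' : V}
    (hu : u ∈ f) (hu' : u' ∈ f) (h : γ u = γ u') : u = u' := by
  induction f with
  | _ c d =>
    rw [SimpleGraph.mem_edgeSet] at hf
    have hcd : γ c ≠ γ d := aux_lab_ne hinj hf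
    rw [Sym2.mem_iff] at hu hu'
    rcases hu with rfl | rfl <;> rcases hu' with rfl | rfl <;>
      first
        | rfl
        | exact absurd h hcd
        | exact absurd h.symm hcd

end Aux

/-- Let `γ : V → W` be a cluster map on the vertices of a graph `G` (inducing the edge
labeling `Sym2.map γ`).  Assume local injectivity (`γ` injective on each closed neighborhood)
and that the labels of the edges in each star take at most two distinct values.  Then in the
relation graph on `Ξ = {(e,f) : e ≠ f, γ(e) = γ(f)}`, where `(e₁,f₁) ~ (e₂,f₂)` iff `e₁,e₂`
share exactly one vertex, `f₁,f₂` share exactly one vertex, and the two shared vertices lie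
in the same cluster, every element has at most two neighbors. -/
theorem stmt8 {V W : Type*} [Fintype V] (G : SimpleGraph V) (γ : V → W)
    (hinj : ∀ v : V, Set.InjOn γ (insert v (G.neighborSet v)))
    (h2lab : ∀ v : V, ((Sym2.map γ) '' {e ∈ G.edgeSet | v ∈ e}).ncard ≤ 2) :
    ∀ e₁ f₁ : Sym2 V, e₁ ∈ G.edgeSet → f₁ ∈ G.edgeSet → e₁ ≠ f₁ →
      Sym2.map γ e₁ = Sym2.map γ f₁ →
      {p : Sym2 V × Sym2 V |
          p.1 ∈ G.edgeSet ∧ p.2 ∈ G.edgeSet ∧ p.1 ≠ p.2 ∧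
          Sym2.map γ p.1 = Sym2.map γ p.2 ∧
          ∃ v u : V, v ∈ e₁ ∧ v ∈ p.1 ∧ e₁ ≠ p.1 ∧
            u ∈ f₁ ∧ u ∈ p.2 ∧ f₁ ≠ p.2 ∧ γ v = γ u}.ncard ≤ 2 := by
  intro e₁ f₁ he₁ hf₁ hnef hlab
  induction e₁ using Sym2.ind with
  | _ a b =>
  by_contra hgt
  push_neg at hgt
  obtain ⟨p, hp, q, hq, r, hr, hpq, hpr, hqr⟩ := (Set.two_lt_ncard (Set.toFinite _)).1 hgt
  -- key uniqueness: two neighbors with the same shared vertex on the `e₁` side coincide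
  have key : ∀ (v : V) (p q : Sym2 V × Sym2 V),
      p.1 ∈ G.edgeSet → p.2 ∈ G.edgeSet → q.1 ∈ G.edgeSet → q.2 ∈ G.edgeSet →
      v ∈ (s(a, b) : Sym2 V) →
      (v ∈ p.1 ∧ s(a, b) ≠ p.1 ∧ ∃ u, u ∈ f₁ ∧ u ∈ p.2 ∧ f₁ ≠ p.2 ∧ γ v = γ u) →
      (v ∈ q.1 ∧ s(a, b) ≠ q.1 ∧ ∃ u, u ∈ f₁ ∧ u ∈ q.2 ∧ f₁ ≠ q.2 ∧ γ v = γ u) →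
      p = q := by
    rintro v p q hp1 hp2 hq1 hq2 hv ⟨hvp1, hnep, u, huf, hup2, hnfp, hγu⟩
      ⟨hvq1, hneq, u', huf', huq2, hnfq, hγu'⟩
    have h1 : p.1 = q.1 :=
      aux_unique hinj h2lab he₁ hv hp1 hvp1 hq1 hvq1 (Ne.symm hnep) (Ne.symm hneq)
    have huu : u = u' := aux_vertex hinj hf₁ huf huf' (hγu.symm.trans hγu')
    subst huu
    have h2 : p.2 = q.2 :=
      aux_unique hinj h2lab hf₁ huf hp2 hup2 hq2 huq2 (Ne.symm hnfp) (Ne.symm hnfq)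
    exact Prod.ext h1 h2
  obtain ⟨hp1, hp2, -, -, vp, up, hvp, hvp1, hnep, hupf, hup2, hnfp, hγp⟩ := hp
  obtain ⟨hq1, hq2, -, -, vq, uq, hvq, hvq1, hneq, huqf, huq2, hnfq, hγq⟩ := hq
  obtain ⟨hr1, hr2, -, -, vr, ur, hvr, hvr1, hner, hurf, hur2, hnfr, hγr⟩ := hr
  have Wp : vp ∈ p.1 ∧ s(a, b) ≠ p.1 ∧ ∃ u, u ∈ f₁ ∧ u ∈ p.2 ∧ f₁ ≠ p.2 ∧ γ vp = γ u :=
    ⟨hvp1, hnep, up, hupf, hup2, hnfp, hγp⟩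
  have Wq : vq ∈ q.1 ∧ s(a, b) ≠ q.1 ∧ ∃ u, u ∈ f₁ ∧ u ∈ q.2 ∧ f₁ ≠ q.2 ∧ γ vq = γ u :=
    ⟨hvq1, hneq, uq, huqf, huq2, hnfq, hγq⟩
  have Wr : vr ∈ r.1 ∧ s(a, b) ≠ r.1 ∧ ∃ u, u ∈ f₁ ∧ u ∈ r.2 ∧ f₁ ≠ r.2 ∧ γ vr = γ u :=
    ⟨hvr1, hner, ur, hurf, hur2, hnfr, hγr⟩
  rcases Sym2.mem_iff.1 hvp with rfl | rfl <;>
    rcases Sym2.mem_iff.1 hvq with rfl | rfl <;>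
      rcases Sym2.mem_iff.1 hvr with rfl | rfl <;>
        first
          | exact hpq (key _ p q hp1 hp2 hq1 hq2 hvp Wp Wq)
          | exact hpr (key _ p r hp1 hp2 hr1 hr2 hvp Wp Wr)
          | exact hqr (key _ q r hq1 hq2 hr1 hr2 hvq Wq Wr)
end

section
/- In a strongly locally injective input, the subgraph G_Ξ of G induced by the union of all edge pairs {e, f} with γ(e) = γ(f), e ≠ f, has maximum degree two; hence every connected component of G_Ξ is a path or a cycle. -/
/-- The set of edges of `G` that occur in some pair of
`Ξ = {{e,f} : e ≠ f, Sym2.map γ e = Sym2.map γ f}`. -/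
def EXi {V W : Type*} (G : SimpleGraph V) (γ : V → W) : Set (Sym2 V) :=
  {e | e ∈ G.edgeSet ∧ ∃ f ∈ G.edgeSet, f ≠ e ∧ Sym2.map γ f = Sym2.map γ e}

/-- The subgraph `G_Ξ` of `G` spanned by those edges. -/
def GXi {V W : Type*} (G : SimpleGraph V) (γ : V → W) : SimpleGraph V :=
  SimpleGraph.fromEdgeSet (EXi G γ)

/-- For a strongly locally injective input `(G, H, γ)` — (i) `γ` injective on each closed
neighborhood, (ii) every degree-one vertex incident to an edge whose label is attained only
by that edge, (iii) every vertex whose star carries at least three labels is fixed (alone in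
its cluster) — the subgraph `G_Ξ` has maximum degree two; hence each of its connected
components is a path (contains a vertex of degree at most one) or a cycle (all degrees two). -/
theorem stmt9 {V W : Type*} [Fintype V] (G : SimpleGraph V) (γ : V → W)
    (h1 : ∀ v : V, Set.InjOn γ (insert v (G.neighborSet v)))
    (h2 : ∀ v : V, (G.neighborSet v).ncard = 1 →
      ∃ e ∈ G.edgeSet, v ∈ e ∧ ∀ f ∈ G.edgeSet, Sym2.map γ f = Sym2.map γ e → f = e)
    (h3 : ∀ v : V, 2 < ((Sym2.map γ) '' {e ∈ G.edgeSet | v ∈ e}).ncard →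
      ∀ u : V, γ u = γ v → u = v) :
    (∀ v : V, ((GXi G γ).neighborSet v).ncard ≤ 2) ∧
    ∀ C : (GXi G γ).ConnectedComponent,
      (∃ v ∈ C.supp, ((GXi G γ).neighborSet v).ncard ≤ 1) ∨
      (∀ v ∈ C.supp, ((GXi G γ).neighborSet v).ncard = 2) := by
  classical
  have key : ∀ v : V, ((GXi G γ).neighborSet v).ncard ≤ 2 := by
    intro v
    by_contra hc
    push_neg at hc
    obtain ⟨u1, hu1, u2, hu2, u3, hu3, h12, h13, h23⟩ :=
      (Set.two_lt_ncard (Set.toFinite _)).mp hc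
    -- adjacency facts
    have hadj : ∀ u ∈ (GXi G γ).neighborSet v, s(v, u) ∈ EXi G γ ∧ v ≠ u := by
      intro u hu
      exact (SimpleGraph.fromEdgeSet_adj _).mp hu
    have hGadj : ∀ u ∈ (GXi G γ).neighborSet v, G.Adj v u := fun u hu =>
      (SimpleGraph.mem_edgeSet G).mp ((hadj u hu).1).1
    have hmem : ∀ u ∈ (GXi G γ).neighborSet v, u ∈ (insert v (G.neighborSet v) : Set V) :=
      fun u hu => Set.mem_insert_of_mem _ (hGadj u hu)
    have hvmem : v ∈ (insert v (G.neighborSet v) : Set V) := Set.mem_insert _ _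
    have hγne : ∀ u ∈ (GXi G γ).neighborSet v, γ u ≠ γ v := by
      intro u hu h
      exact (hadj u hu).2 ((h1 v (hmem u hu) hvmem h).symm)
    have hγij : ∀ u ∈ (GXi G γ).neighborSet v, ∀ u' ∈ (GXi G γ).neighborSet v,
        γ u = γ u' → u = u' := by
      intro u hu u' hu' h
      exact h1 v (hmem u hu) (hmem u' hu') h
    -- the three star edges have distinct images
    have himg : ∀ u ∈ (GXi G γ).neighborSet v,
        s(γ v, γ u) ∈ (Sym2.map γ) '' {e ∈ G.edgeSet | v ∈ e} := by
      intro u hu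
      exact ⟨s(v, u), ⟨(SimpleGraph.mem_edgeSet G).mpr (hGadj u hu), Sym2.mem_mk_left v u⟩,
        Sym2.map_pair_eq γ v u⟩
    have hdist : ∀ u ∈ (GXi G γ).neighborSet v, ∀ u' ∈ (GXi G γ).neighborSet v,
        u ≠ u' → s(γ v, γ u) ≠ s(γ v, γ u') := by
      intro u hu u' hu' hne h
      rw [Sym2.eq_iff] at h
      rcases h with ⟨-, h⟩ | ⟨h, h'⟩
      · exact hne (hγij u hu u' hu' h)
      · exact hγne u' hu' h.symm
    have hbig : 2 < ((Sym2.map γ) '' {e ∈ G.edgeSet | v ∈ e}).ncard := by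
      rw [Set.two_lt_ncard (Set.toFinite _)]
      exact ⟨_, himg u1 hu1, _, himg u2 hu2, _, himg u3 hu3,
        hdist u1 hu1 u2 hu2 h12, hdist u1 hu1 u3 hu3 h13, hdist u2 hu2 u3 hu3 h23⟩
    have hfix := h3 v hbig
    -- derive contradiction from the mate of edge s(v, u1)
    obtain ⟨he, f, hf, hfne, hfmap⟩ := (hadj u1 hu1).1
    rw [Sym2.map_pair_eq] at hfmap
    revert hf hfne hfmap
    induction f using Sym2.inductionOn with
    | hf a b =>
      intro hf hfne hfmap
      rw [Sym2.map_pair_eq, Sym2.eq_iff] at hfmap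
      have hGf : G.Adj a b := (SimpleGraph.mem_edgeSet G).mp hf
      rcases hfmap with ⟨ha, hb⟩ | ⟨ha, hb⟩
      · have hav : a = v := hfix a ha
        rw [hav] at hGf
        have : b = u1 := h1 v (Set.mem_insert_of_mem _ hGf) (hmem u1 hu1) hb
        exact hfne (by rw [hav, this])
      · have hbv : b = v := hfix b hb
        rw [hbv] at hGf
        have : a = u1 := h1 v (Set.mem_insert_of_mem _ hGf.symm) (hmem u1 hu1) ha
        exact hfne (by rw [hbv, this, Sym2.eq_swap])
  refine ⟨key, fun C => ?_⟩
  by_cases h : ∃ v ∈ C.supp, ((GXi G γ).neighborSet v).ncard ≤ 1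
  · exact Or.inl h
  · push_neg at h
    exact Or.inr fun v hv => le_antisymm (key v) (h v hv)
end

section
/- A simple closed curve in the plane has winding number 0 or ±1 around every point not on the curve; hence a closed curve in the plane that winds at least twice around some point cannot be an embedding (must have a self-intersection). -/
/-!
Write `c t - p = r t • exp (θ t * I)`. Periodicity of `c` forces `θ (t + 1) = θ t + d` for the
constant `d = θ 1 - θ 0 ∈ 2πℤ`. If `d ≠ 0`, the lifted curve `t ↦ (θ t, r t)` runs from
`θ = -∞` to `θ = +∞` inside the band `min r ≤ r ≤ max r`, so by the Poincaré–Miranda theorem it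
meets its translate by `2π` in the `θ`-direction: `θ s = θ t + 2π` and `r s = r t`. Then
`c s = c t`, injectivity gives `s - t = m ∈ ℤ`, and `2π = m d`; hence `d = ±2π`.

Poincaré–Miranda on the square is proved by lifting the argument of `f + g * I` continuously
(the plane is simply connected) and following it around the boundary: each edge forces a
quarter turn, so the argument would come back to its starting corner increased by `2π`.
-/

open Real Set Function AddSubgroup

theorem mem_Icc_pi_div_two_pi_of_sin_nonneg {γ : ℝ → ℝ} (hγ : ContinuousOn γ (Icc 0 1))
    (hsin : ∀ t ∈ Icc (0 : ℝ) 1, 0 ≤ sin (γ t)) (h0 : γ 0 ∈ Icc 0 (π / 2))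
    (h1 : cos (γ 1) ≤ 0) : γ 1 ∈ Icc (π / 2) π := by
  have hlo : -(π / 2) < γ 1 := by
    by_contra! h
    obtain ⟨t, ht, hγt⟩ :=
      intermediate_value_Icc' zero_le_one hγ ⟨h, by linarith [h0.1, pi_pos]⟩
    have := hsin t ht
    rw [hγt, sin_neg, sin_pi_div_two] at this
    linarith
  have hhi : γ 1 < π + π / 2 := by
    by_contra! h
    obtain ⟨t, ht, hγt⟩ := intermediate_value_Icc zero_le_one hγ ⟨by linarith [h0.2, pi_pos], h⟩
    have := hsin t ht
    rw [hγt, sin_add_pi_div_two, cos_pi] at this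
    linarith
  constructor
  · by_contra! h
    exact (cos_pos_of_mem_Ioo ⟨hlo, h⟩).not_ge h1
  · by_contra! h
    have := sin_neg_of_neg_of_neg_pi_lt (x := γ 1 - 2 * π) (by linarith) (by linarith)
    rw [sin_sub_two_pi] at this
    exact this.not_ge (hsin 1 ⟨zero_le_one, le_rfl⟩)

theorem exists_left_edge_cos_neg {α : ℝ × ℝ → ℝ} (hα : Continuous α)
    (h₀₀ : α (0, 0) ∈ Icc 0 (π / 2)) (hbot : ∀ x ∈ Icc (0 : ℝ) 1, 0 ≤ sin (α (x, 0)))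
    (hright : ∀ y ∈ Icc (0 : ℝ) 1, cos (α (1, y)) ≤ 0)
    (htop : ∀ x ∈ Icc (0 : ℝ) 1, sin (α (x, 1)) ≤ 0) :
    ∃ y ∈ Icc (0 : ℝ) 1, cos (α (0, y)) < 0 := by
  by_contra! hleft
  have h₀ : (0 : ℝ) ∈ Icc (0 : ℝ) 1 := left_mem_Icc.2 zero_le_one
  have h₁ : (1 : ℝ) ∈ Icc (0 : ℝ) 1 := right_mem_Icc.2 zero_le_one
  have hsymm : ∀ t ∈ Icc (0 : ℝ) 1, 1 - t ∈ Icc (0 : ℝ) 1 := fun t ht ↦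
    ⟨by linarith [ht.2], by linarith [ht.1]⟩
  -- Walk the boundary counterclockwise; along the `k`-th edge, `α - k π / 2` satisfies the
  -- hypotheses of the quarter-turn lemma.
  have h₁₀ := mem_Icc_pi_div_two_pi_of_sin_nonneg (γ := fun t ↦ α (t, 0)) (by fun_prop)
    hbot h₀₀ (hright 0 h₀)
  have h₁₁ := mem_Icc_pi_div_two_pi_of_sin_nonneg (γ := fun t ↦ α (1, t) - π / 2) (by fun_prop)
    (fun t ht ↦ by simpa [sin_sub_pi_div_two] using hright t ht)
    ⟨by linarith [h₁₀.1], by linarith [h₁₀.2]⟩ (by simpa [cos_sub_pi_div_two] using htop 1 h₁)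
  have h₀₁ := mem_Icc_pi_div_two_pi_of_sin_nonneg (γ := fun t ↦ α (1 - t, 1) - π) (by fun_prop)
    (fun t ht ↦ by simpa [sin_sub_pi] using htop _ (hsymm t ht))
    (by simp only [sub_zero]; exact ⟨by linarith [h₁₁.1], by linarith [h₁₁.2]⟩)
    (by simpa [cos_sub_pi] using hleft 1 h₁)
  rw [sub_self] at h₀₁
  have h₀₀' := mem_Icc_pi_div_two_pi_of_sin_nonneg
    (γ := fun t ↦ α (0, 1 - t) - π - π / 2) (by fun_prop)
    (fun t ht ↦ by simpa [sin_sub_pi_div_two, cos_sub_pi] using hleft _ (hsymm t ht))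
    (by simp only [sub_zero]; exact ⟨by linarith [h₀₁.1], by linarith [h₀₁.2]⟩)
    (by simpa [cos_sub_pi_div_two, sin_sub_pi] using hbot 0 h₀)
  simp only [sub_self] at h₀₀'
  linarith [h₀₀.2, h₀₀'.1, pi_pos]

theorem exists_continuous_arg_lift {A : Type*} [TopologicalSpace A] [SimplyConnectedSpace A]
    [LocallyPathConnectedSpace A] {V : A → ℂ} (hV : Continuous V) (hV0 : ∀ a, V a ≠ 0) (a₀ : A) :
    ∃ α : A → ℝ, Continuous α ∧ α a₀ = (V a₀).arg ∧
      ∀ a, V a = ‖V a‖ * Complex.exp (α a * Complex.I) := by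
  obtain ⟨Φ, ⟨hΦ₀, hΦ⟩, -⟩ := Complex.isCoveringMapOn_exp.existsUnique_continuousMap_lifts
    ⟨V, hV⟩ (a₀ := a₀) (Complex.exp_log (hV0 a₀)) hV0
  refine ⟨fun a ↦ (Φ a).im, by fun_prop, by simp [hΦ₀, Complex.log_im], fun a ↦ ?_⟩
  have hΦa : Complex.exp (Φ a) = V a := congrFun hΦ a
  rw [← hΦa]
  conv_lhs => rw [← Complex.re_add_im (Φ a), Complex.exp_add]
  simp [Complex.norm_exp, Complex.ofReal_exp]

theorem exists_continuous_ne_zero_extension_of_square {f g : ℝ × ℝ → ℝ}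
    (hf : ContinuousOn f (Icc 0 1 ×ˢ Icc 0 1)) (hg : ContinuousOn g (Icc 0 1 ×ˢ Icc 0 1))
    (hfg : ∀ q ∈ Icc 0 1 ×ˢ Icc 0 1, f q = 0 → g q ≠ 0) :
    ∃ V : ℝ × ℝ → ℂ, Continuous V ∧ (∀ q, V q ≠ 0) ∧
      ∀ q ∈ Icc 0 1 ×ˢ Icc 0 1, V q = f q + g q * Complex.I := by
  let clamp : ℝ × ℝ → ℝ × ℝ := fun q ↦
    ((projIcc 0 1 zero_le_one q.1 : ℝ), (projIcc 0 1 zero_le_one q.2 : ℝ))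
  have hclamp_mem : ∀ q, clamp q ∈ Icc 0 1 ×ˢ Icc 0 1 := fun q ↦ ⟨Subtype.prop _, Subtype.prop _⟩
  have hclamp_cont : Continuous clamp := by fun_prop
  refine ⟨fun q ↦ f (clamp q) + g (clamp q) * Complex.I, ?_, fun q h ↦ ?_, fun q hq ↦ ?_⟩
  · exact (Complex.continuous_ofReal.comp (hf.comp_continuous hclamp_cont hclamp_mem)).add
      ((Complex.continuous_ofReal.comp (hg.comp_continuous hclamp_cont hclamp_mem)).mul
        continuous_const)
  · exact hfg _ (hclamp_mem q) (by simpa using congrArg Complex.re h)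
      (by simpa using congrArg Complex.im h)
  · simp [clamp, projIcc_of_mem _ hq.1, projIcc_of_mem _ hq.2]

theorem poincare_miranda_unit_square {f g : ℝ × ℝ → ℝ}
    (hf : ContinuousOn f (Icc 0 1 ×ˢ Icc 0 1)) (hg : ContinuousOn g (Icc 0 1 ×ˢ Icc 0 1))
    (hf₀ : ∀ y ∈ Icc (0 : ℝ) 1, 0 ≤ f (0, y)) (hf₁ : ∀ y ∈ Icc (0 : ℝ) 1, f (1, y) ≤ 0)
    (hg₀ : ∀ x ∈ Icc (0 : ℝ) 1, 0 ≤ g (x, 0)) (hg₁ : ∀ x ∈ Icc (0 : ℝ) 1, g (x, 1) ≤ 0) :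
    ∃ x ∈ Icc (0 : ℝ) 1, ∃ y ∈ Icc (0 : ℝ) 1, f (x, y) = 0 ∧ g (x, y) = 0 := by
  by_contra! hfg
  obtain ⟨V, hV, hV0, hVS⟩ := exists_continuous_ne_zero_extension_of_square hf hg
    fun q hq ↦ hfg q.1 hq.1 q.2 hq.2
  obtain ⟨α, hα, hα₀, hαV⟩ := exists_continuous_arg_lift hV hV0 (0, 0)
  have hpos : ∀ q, 0 < ‖V q‖ := fun q ↦ norm_pos_iff.2 (hV0 q)
  have hre : ∀ q ∈ Icc 0 1 ×ˢ Icc 0 1, f q = ‖V q‖ * cos (α q) := fun q hq ↦ by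
    rw [show f q = (V q).re by simp [hVS q hq]]
    conv_lhs => rw [hαV q]
    simp
  have him : ∀ q ∈ Icc 0 1 ×ˢ Icc 0 1, g q = ‖V q‖ * sin (α q) := fun q hq ↦ by
    rw [show g q = (V q).im by simp [hVS q hq]]
    conv_lhs => rw [hαV q]
    simp
  have h₀ : (0 : ℝ) ∈ Icc (0 : ℝ) 1 := left_mem_Icc.2 zero_le_one
  have h₁ : (1 : ℝ) ∈ Icc (0 : ℝ) 1 := right_mem_Icc.2 zero_le_one
  have h₀₀ : α (0, 0) ∈ Icc 0 (π / 2) := by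
    rw [hα₀, hVS _ ⟨h₀, h₀⟩]
    exact ⟨Complex.arg_nonneg_iff.2 (by simpa using hg₀ 0 h₀),
      Complex.arg_le_pi_div_two_iff.2 (.inl (by simpa using hf₀ 0 h₀))⟩
  obtain ⟨y, hy, hcos⟩ := exists_left_edge_cos_neg hα h₀₀
    (fun x hx ↦ nonneg_of_mul_nonneg_right (him (x, 0) ⟨hx, h₀⟩ ▸ hg₀ x hx) (hpos _))
    (fun y hy ↦ nonpos_of_mul_nonpos_right (hre (1, y) ⟨h₁, hy⟩ ▸ hf₁ y hy) (hpos _))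
    (fun x hx ↦ nonpos_of_mul_nonpos_right (him (x, 1) ⟨hx, h₁⟩ ▸ hg₁ x hx) (hpos _))
  exact hcos.not_ge (nonneg_of_mul_nonneg_right (hre (0, y) ⟨h₀, hy⟩ ▸ hf₀ y hy) (hpos _))

theorem Function.Periodic.exists_int_eq_add_of_injOn {α : Type*} {c : ℝ → α} (hc : Periodic c 1)
    (hinj : InjOn c (Ico 0 1)) {s t : ℝ} (h : c s = c t) : ∃ m : ℤ, s = t + m := by
  have hfract : ∀ x, c (Int.fract x) = c x := fun x ↦ by
    simpa only [mul_one, Int.fract] using hc.sub_int_mul_eq ⌊x⌋ (x := x)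
  have hmem : ∀ x, Int.fract x ∈ Ico (0 : ℝ) 1 := fun x ↦ ⟨Int.fract_nonneg x, Int.fract_lt_one x⟩
  obtain ⟨m, hm⟩ := Int.fract_eq_fract.1 (hinj (hmem s) (hmem t) (by rw [hfract, hfract, h]))
  exact ⟨m, by linarith⟩

theorem map_add_int_of_map_add_one {θ : ℝ → ℝ} {d : ℝ} (hθd : ∀ t, θ (t + 1) = θ t + d)
    (m : ℤ) (t : ℝ) : θ (t + m) = θ t + m * d := by
  have hper : Periodic (fun t ↦ θ t - t * d) 1 := fun t ↦ by simp only [hθd]; ring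
  have := hper.int_mul m t
  simp only [mul_one] at this
  linarith

theorem exists_map_le_and_exists_le_map {θ : ℝ → ℝ} {d : ℝ} (hθd : ∀ t, θ (t + 1) = θ t + d)
    (hd : d ≠ 0) (M : ℝ) : (∃ a, θ a ≤ M) ∧ ∃ b, M ≤ θ b := by
  obtain ⟨N, hN⟩ := exists_nat_ge ((|M| + |θ 0|) / |d|)
  have hNd : |M| + |θ 0| ≤ N * |d| := (div_le_iff₀ (abs_pos.2 hd)).1 hN
  have hθN := map_add_int_of_map_add_one hθd N 0
  have hθN' := map_add_int_of_map_add_one hθd (-N) 0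
  push_cast at hθN hθN'
  simp only [zero_add, neg_mul] at hθN hθN'
  have hM := abs_le.1 (le_refl |M|)
  have hθ₀ := abs_le.1 (le_refl |θ 0|)
  rcases abs_cases d with ⟨hd', -⟩ | ⟨hd', -⟩ <;> rw [hd'] at hNd
  · exact ⟨⟨-N, by linarith⟩, ⟨N, by linarith⟩⟩
  · exact ⟨⟨N, by linarith⟩, ⟨-N, by linarith⟩⟩

theorem exists_map_eq_add_and_eq {θ ρ : ℝ → ℝ} {d : ℝ} (hθ : Continuous θ) (hρ : Continuous ρ)
    (hρper : Periodic ρ 1) (hθd : ∀ t, θ (t + 1) = θ t + d) (hd : d ≠ 0) (δ : ℝ) :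
    ∃ s t, θ s = θ t + δ ∧ ρ s = ρ t := by
  obtain ⟨-, ⟨tmin, rfl⟩, hmin⟩ :=
    (hρper.compact_of_continuous one_ne_zero hρ).exists_isLeast (range_nonempty ρ)
  obtain ⟨-, ⟨tmax, rfl⟩, hmax⟩ :=
    (hρper.compact_of_continuous one_ne_zero hρ).exists_isGreatest (range_nonempty ρ)
  let z : ℝ → ℝ := fun y ↦ tmin + y * (tmax - tmin)
  obtain ⟨C, hC⟩ := (isCompact_Icc (a := (0 : ℝ)) (b := 1)).exists_bound_of_continuousOn
    (f := fun y ↦ θ (z y)) (by fun_prop)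
  have hθz : ∀ y ∈ Icc (0 : ℝ) 1, |θ (z y)| ≤ C := hC
  obtain ⟨a₁, ha₁⟩ := (exists_map_le_and_exists_le_map hθd hd (δ - C)).1
  obtain ⟨a₂, ha₂⟩ := (exists_map_le_and_exists_le_map hθd hd (δ + C)).2
  let a : ℝ → ℝ := fun x ↦ a₁ + x * (a₂ - a₁)
  obtain ⟨x, -, y, hy, hF, hG⟩ := poincare_miranda_unit_square
    (f := fun q ↦ θ (z q.2) + δ - θ (a q.1)) (g := fun q ↦ ρ (a q.1) - ρ (z q.2))
    (by fun_prop) (by fun_prop)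
    (fun y hy ↦ by simp only [a, zero_mul, add_zero]; linarith [(abs_le.1 (hθz y hy)).1])
    (fun y hy ↦ by simp only [a, one_mul, add_sub_cancel]; linarith [(abs_le.1 (hθz y hy)).2])
    (fun x _ ↦ by simp only [z, zero_mul, add_zero]; linarith [hmin ⟨a x, rfl⟩])
    (fun x _ ↦ by simp only [z, one_mul, add_sub_cancel]; linarith [hmax ⟨a x, rfl⟩])
  exact ⟨a x, z y, by linarith, by linarith⟩

theorem sub_mem_zmultiples_of_exp_mul_I_eq {a b : ℝ}
    (h : Complex.exp (a * Complex.I) = Complex.exp (b * Complex.I)) :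
    a - b ∈ zmultiples (2 * π) := by
  obtain ⟨n, hn⟩ := Complex.exp_eq_exp_iff_exists_int.1 h
  have him : a = b + n * (2 * π) := by simpa using congrArg Complex.im hn
  exact mem_zmultiples_iff.2 ⟨n, by rw [zsmul_eq_mul, him]; ring⟩

theorem map_add_one_eq_of_sub_mem_zmultiples {θ : ℝ → ℝ} {a : ℝ} (hθ : Continuous θ)
    (h : ∀ t, θ (t + 1) - θ t ∈ zmultiples a) (t : ℝ) : θ (t + 1) = θ t + (θ 1 - θ 0) := by
  have hdiscrete : IsDiscrete (zmultiples a : Set ℝ) :=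
    isDiscrete_iff_discreteTopology.2 (inferInstanceAs (DiscreteTopology (zmultiples a)))
  have := isPreconnected_univ.constant_of_mapsTo hdiscrete (f := fun t ↦ θ (t + 1) - θ t)
    (by fun_prop) (fun t _ ↦ h t) (mem_univ t) (mem_univ 0)
  rw [zero_add] at this
  linarith

theorem two_pi_mem_zmultiples_of_injOn {c : ℝ → ℂ} {θ r : ℝ → ℝ} {p : ℂ} {d : ℝ}
    (hc : Periodic c 1) (hinj : InjOn c (Ico 0 1)) (hθ : Continuous θ) (hr : Continuous r)
    (hrper : Periodic r 1)
    (hlift : ∀ t, c t - p = r t * Complex.exp (θ t * Complex.I))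
    (hθd : ∀ t, θ (t + 1) = θ t + d) (hd : d ≠ 0) : 2 * π ∈ zmultiples d := by
  obtain ⟨s, t, hθst, hrst⟩ := exists_map_eq_add_and_eq hθ hr hrper hθd hd (2 * π)
  have hcst : c s = c t := by
    have hs := hlift s
    rw [hθst, hrst, Complex.ofReal_add, add_mul, Complex.exp_add, Complex.ofReal_mul,
      Complex.ofReal_ofNat, Complex.exp_two_pi_mul_I, mul_one, ← hlift t] at hs
    exact sub_left_injective hs
  obtain ⟨m, rfl⟩ := hc.exists_int_eq_add_of_injOn hinj hcst
  rw [map_add_int_of_map_add_one hθd, add_right_inj] at hθst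
  exact mem_zmultiples_iff.2 ⟨m, by rw [zsmul_eq_mul, hθst]⟩

/-- A simple closed curve in the plane has winding number `0` or `±1` around every point not
on the curve; hence a closed curve winding (in absolute value) at least twice around some
point has a self-intersection.  The closed curve is a continuous `c : ℝ → ℂ` of period 1,
simplicity means injectivity on `[0,1)`, and the winding around `p` is `(θ 1 − θ 0)/2π` for a
continuous angular lift `θ` with `c t − p = r t · exp(i θ t)`, `r t > 0`. -/
theorem stmt16 (c : ℝ → ℂ) (θ r : ℝ → ℝ) (p : ℂ)
    (hc : Continuous c) (hper : ∀ t : ℝ, c (t + 1) = c t)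
    (hθ : Continuous θ) (hr : ∀ t : ℝ, 0 < r t)
    (hlift : ∀ t : ℝ, c t - p = (r t : ℂ) * Complex.exp ((θ t : ℂ) * Complex.I)) :
    (Set.InjOn c (Set.Ico (0 : ℝ) 1) →
      θ 1 - θ 0 = 0 ∨ θ 1 - θ 0 = 2 * Real.pi ∨ θ 1 - θ 0 = -(2 * Real.pi)) ∧
    (4 * Real.pi ≤ |θ 1 - θ 0| → ¬ Set.InjOn c (Set.Ico (0 : ℝ) 1)) := by
  have hr_eq : ∀ t, r t = ‖c t - p‖ := fun t ↦ by
    rw [hlift, norm_mul, Complex.norm_exp_ofReal_mul_I, mul_one, Complex.norm_real,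
      norm_of_nonneg (hr t).le]
  have hr_cont : Continuous r := funext hr_eq ▸ by fun_prop
  have hrper : Periodic r 1 := fun t ↦ by rw [hr_eq, hr_eq, hper]
  have hθ_step : ∀ t, θ (t + 1) - θ t ∈ zmultiples (2 * π) := fun t ↦
    sub_mem_zmultiples_of_exp_mul_I_eq <|
      mul_left_cancel₀ (Complex.ofReal_ne_zero.2 (hr t).ne') <| by
        rw [← hlift, ← hrper t, ← hlift, hper]
  have hwind : InjOn c (Ico 0 1) →
      θ 1 - θ 0 = 0 ∨ θ 1 - θ 0 = 2 * π ∨ θ 1 - θ 0 = -(2 * π) := fun hinj ↦ by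
    rcases eq_or_ne (θ 1 - θ 0) 0 with h | h
    · exact .inl h
    have h2π := two_pi_mem_zmultiples_of_injOn hper hinj hθ hr_cont hrper hlift
      (map_add_one_eq_of_sub_mem_zmultiples hθ hθ_step) h
    have hd : θ 1 - θ 0 ∈ zmultiples (2 * π) := by simpa using hθ_step 0
    rcases (zmultiples_eq_zmultiples_iff (not_isOfFinAddOrder_of_isAddTorsionFree
      two_pi_pos.ne')).1 (le_antisymm (zmultiples_le_of_mem h2π) (zmultiples_le_of_mem hd))
      with h' | h'
    · exact .inr (.inl h'.symm)
    · exact .inr (.inr h'.symm)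
  refine ⟨hwind, fun h4π hinj ↦ ?_⟩
  have : |θ 1 - θ 0| ≤ 2 * π := by
    rcases hwind hinj with h | h | h <;> simp [h, abs_of_pos two_pi_pos, pi_pos.le]
  linarith [pi_pos]
end
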